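/- arXiv:2407.20019 — 6 statements merged into one kernel-verified Lean document; each statement's English description precedes it below -/
import Mathlib

section
/- For all real numbers b ≥ 0 and all real e, the function M₂(b,e) = (2 + e)² / ((1/4)(1 - b + 2e)² + (3/4)(1 + b)²) satisfies M₂(b,e) ≤ 4, with equality at b = e = 0. -/
/-!
Clearing the denominator, `M₂(b,e) ≤ 4` becomes `(2 + e)² ≤ 4·D(b,e)`, and the gap is the
sum of squares `4·D - (2 + e)² = 4b + ((3e - 2b)² + 8b²)/3`, which is nonnegative as soon as `b ≥ 0`
and vanishes at `b = e = 0`.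
-/

lemma four_mul_denom_sub_sq (b e : ℝ) :
    4 * ((1/4) * (1 - b + 2*e)^2 + (3/4) * (1 + b)^2) - (2 + e)^2
      = 4 * b + ((3*e - 2*b)^2 + 8 * b^2) / 3 := by
  ring

lemma denom_pos {b : ℝ} (e : ℝ) (hb : 0 ≤ b) :
    0 < (1/4) * (1 - b + 2*e)^2 + (3/4) * (1 + b)^2 := by
  have : 0 < 1 + b := by linarith
  positivity

lemma sq_two_add_le_four_mul_denom {b : ℝ} (e : ℝ) (hb : 0 ≤ b) :
    (2 + e)^2 ≤ 4 * ((1/4) * (1 - b + 2*e)^2 + (3/4) * (1 + b)^2) := by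
  have gap_nonneg : 0 ≤ 4 * b + ((3*e - 2*b)^2 + 8 * b^2) / 3 := by positivity
  linarith [four_mul_denom_sub_sq b e]

theorem stmt_3 :
    (∀ b e : ℝ, 0 ≤ b →
      (2 + e)^2 / ((1/4) * (1 - b + 2*e)^2 + (3/4) * (1 + b)^2) ≤ 4) ∧
    (2 + 0 : ℝ)^2 / ((1/4) * (1 - 0 + 2*0 : ℝ)^2 + (3/4) * (1 + 0 : ℝ)^2) = 4 := by
  refine ⟨fun b e hb => ?_, by norm_num⟩
  rw [div_le_iff₀ (denom_pos e hb)]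
  exact sq_two_add_le_four_mul_denom e hb
end

section
/- For all real numbers b, e with b ≥ 0 and -b ≤ e ≤ 0, the function M̃₂(b,e) = (2 - e)² / ((1/4)(1 - b + 2e)² + (3/4)(1 + b)²) satisfies M̃₂(b,e) ≤ 13/3, with equality at b = 1/6, e = -1/6. -/
/-! After clearing the denominator `D`, the bound is the identity
`13 D - 3 (2 - e)² = (6e + 1)² + 13 (b + e)(1 + b - 2e)`, whose right side is nonnegative when
`b + e ≥ 0` and `1 + b - 2e ≥ 0`; both terms vanish at `b = 1/6`, `e = -1/6`. -/

lemma thirteen_mul_denom_sub_three_mul_sq (b e : ℝ) :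
    13 * ((1/4) * (1 - b + 2*e)^2 + (3/4) * (1 + b)^2) - 3 * (2 - e)^2 =
      (6*e + 1)^2 + 13 * (b + e) * (1 + b - 2*e) := by
  ring

lemma sq_div_denom_le {b e : ℝ} (hb : 0 ≤ b) (hbe : -b ≤ e) (he : e ≤ 0) :
    (2 - e)^2 / ((1/4) * (1 - b + 2*e)^2 + (3/4) * (1 + b)^2) ≤ 13/3 := by
  have hD : 0 < (1/4) * (1 - b + 2*e)^2 + (3/4) * (1 + b)^2 := by positivity
  have hprod : 0 ≤ (b + e) * (1 + b - 2*e) := mul_nonneg (by linarith) (by linarith)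
  rw [div_le_iff₀ hD]
  linarith [thirteen_mul_denom_sub_three_mul_sq b e, sq_nonneg (6*e + 1)]

theorem stmt_4 :
    (∀ b e : ℝ, 0 ≤ b → -b ≤ e → e ≤ 0 →
      (2 - e)^2 / ((1/4) * (1 - b + 2*e)^2 + (3/4) * (1 + b)^2) ≤ 13/3) ∧
    (2 - (-1/6) : ℝ)^2 /
      ((1/4) * (1 - 1/6 + 2*(-1/6) : ℝ)^2 + (3/4) * (1 + 1/6 : ℝ)^2) = 13/3 :=
  ⟨fun _ _ hb hbe he => sq_div_denom_le hb hbe he, by norm_num⟩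
end

section
/- For all real numbers b, s, t with 0 ≤ b ≤ 1, 0 ≤ s ≤ 1, 0 ≤ t ≤ 1, the function M₃(b,s,t) = (2 + 2b - s - t)² / ((1/4)(1 - b + 2s - 2t)² + (3/4)(1 + b)²) satisfies M₃(b,s,t) ≤ 16/3, with equality when b = 1 and s = t = 0. -/
/-! Writing `σ = s + t`, the numerator is `(2(1 + b) - σ)²`, and
`(16/3)·denominator - numerator² = (4/3)(1 - b + 2s - 2t)² + σ(4(1 + b) - σ)`,
which is nonnegative as soon as `0 ≤ σ ≤ 4(1 + b)`. -/

noncomputable def M₃ (b s t : ℝ) : ℝ :=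
  (2 + 2*b - s - t)^2 / ((1/4) * (1 - b + 2*s - 2*t)^2 + (3/4) * (1 + b)^2)

lemma M₃_gap_identity (b s t : ℝ) :
    16/3 * ((1/4) * (1 - b + 2*s - 2*t)^2 + (3/4) * (1 + b)^2) - (2 + 2*b - s - t)^2 =
      4/3 * (1 - b + 2*s - 2*t)^2 + (s + t) * (4 * (1 + b) - (s + t)) := by
  ring

lemma M₃_le {b s t : ℝ} (h₀ : 0 ≤ s + t) (h₁ : s + t ≤ 4 * (1 + b)) : M₃ b s t ≤ 16/3 := by
  have hgap := M₃_gap_identity b s t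
  have hprod : 0 ≤ (s + t) * (4 * (1 + b) - (s + t)) := mul_nonneg h₀ (by linarith)
  -- if the denominator vanishes, `M₃ b s t = 0` by Lean's convention `x / 0 = 0`
  refine div_le_of_le_mul₀ (by positivity) (by norm_num) ?_
  linarith [sq_nonneg (1 - b + 2*s - 2*t)]

lemma M₃_one_zero_zero : M₃ 1 0 0 = 16/3 := by
  norm_num [M₃]

theorem stmt_5 :
    (∀ b s t : ℝ, 0 ≤ b → b ≤ 1 → 0 ≤ s → s ≤ 1 → 0 ≤ t → t ≤ 1 →
      (2 + 2*b - s - t)^2 /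
        ((1/4) * (1 - b + 2*s - 2*t)^2 + (3/4) * (1 + b)^2) ≤ 16/3) ∧
    (2 + 2*1 - 0 - 0 : ℝ)^2 /
      ((1/4) * (1 - 1 + 2*0 - 2*0 : ℝ)^2 + (3/4) * (1 + 1 : ℝ)^2) = 16/3 := by
  refine ⟨fun b s t hb _ hs hs₁ ht ht₁ => ?_, M₃_one_zero_zero⟩
  exact M₃_le (by linarith) (by linarith)
end

section
/- For all real numbers b, s, t with 0 ≤ b, 0 ≤ s, 0 ≤ t, the function M₈(b,s,t) = (2 + s + t)² / ((1/4)(1 - b - s + t)² + (3/4)(1 + s + t + b)²) satisfies M₈(b,s,t) ≤ 4, with equality at b = s = t = 0. -/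
/-! With `u = 1 + t` and `v = b + s`, four times the denominator is `4 (u² + u v + v²) ≥ (2u + v)²`,
and on the nonnegative orthant `2 + s + t ≤ 2u + v`. -/

lemma sq_two_add_le_four_mul_quadratic_form {b s t : ℝ} (hb : 0 ≤ b) (hs : 0 ≤ s) (ht : 0 ≤ t) :
    (2 + s + t) ^ 2 ≤ 4 * ((1/4) * (1 - b - s + t) ^ 2 + (3/4) * (1 + s + t + b) ^ 2) :=
  calc (2 + s + t) ^ 2 ≤ (2 * (1 + t) + (b + s)) ^ 2 :=
        pow_le_pow_left₀ (by linarith) (by linarith) 2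
    _ ≤ 4 * ((1 + t) ^ 2 + (1 + t) * (b + s) + (b + s) ^ 2) := by nlinarith [sq_nonneg (b + s)]
    _ = 4 * ((1/4) * (1 - b - s + t) ^ 2 + (3/4) * (1 + s + t + b) ^ 2) := by ring

theorem stmt_13 :
    (∀ b s t : ℝ, 0 ≤ b → 0 ≤ s → 0 ≤ t →
      (2 + s + t)^2 /
        ((1/4) * (1 - b - s + t)^2 + (3/4) * (1 + s + t + b)^2) ≤ 4) ∧
    (2 + 0 + 0 : ℝ)^2 /
      ((1/4) * (1 - 0 - 0 + 0 : ℝ)^2 + (3/4) * (1 + 0 + 0 + 0 : ℝ)^2) = 4 := by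
  refine ⟨fun b s t hb hs ht => ?_, by norm_num⟩
  have hden : 0 < (1/4) * (1 - b - s + t) ^ 2 + (3/4) * (1 + s + t + b) ^ 2 := by positivity
  rw [div_le_iff₀ hden]
  exact sq_two_add_le_four_mul_quadratic_form hb hs ht
end

section
/- For all real numbers b, s, t with 0 ≤ b, 0 ≤ s, 0 ≤ t, the function M₉(b,s,t) = (2 + 2b + 2s + 2t)² / ((1/4)(1 - b - s + t)² + (3/4)(1 + s + t + b)²) satisfies M₉(b,s,t) ≤ 16/3, with equality whenever t = b + s - 1 (and this is nonnegative). -/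
/-! In terms of `x = 1 + b + s + t` and `y = 1 - b - s + t` the quotient is `16 x² / (3 x² + y²)`,
which is at most `16/3`, with equality when `y = 0` and `x ≠ 0`, i.e. `t = b + s - 1`. -/

lemma sq_two_mul_div_le (x y : ℝ) :
    (2 * x) ^ 2 / ((1/4) * y ^ 2 + (3/4) * x ^ 2) ≤ 16/3 := by
  refine div_le_of_le_mul₀ (by positivity) (by norm_num) ?_
  nlinarith [sq_nonneg y]

lemma sq_two_mul_div_eq_of_eq_zero {x y : ℝ} (hx : x ≠ 0) (hy : y = 0) :
    (2 * x) ^ 2 / ((1/4) * y ^ 2 + (3/4) * x ^ 2) = 16/3 := by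
  subst hy
  field_simp
  ring

theorem stmt_14 :
    (∀ b s t : ℝ, 0 ≤ b → 0 ≤ s → 0 ≤ t →
      (2 + 2*b + 2*s + 2*t)^2 /
        ((1/4) * (1 - b - s + t)^2 + (3/4) * (1 + s + t + b)^2) ≤ 16/3) ∧
    (∀ b s t : ℝ, 0 ≤ b → 0 ≤ s → 0 ≤ t → t = b + s - 1 →
      (2 + 2*b + 2*s + 2*t)^2 /
        ((1/4) * (1 - b - s + t)^2 + (3/4) * (1 + s + t + b)^2) = 16/3) := by
  have hxy (b s t : ℝ) :
      (2 + 2*b + 2*s + 2*t)^2 / ((1/4) * (1 - b - s + t)^2 + (3/4) * (1 + s + t + b)^2) =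
        (2 * (1 + b + s + t)) ^ 2 /
          ((1/4) * (1 - b - s + t) ^ 2 + (3/4) * (1 + b + s + t) ^ 2) := by
    ring
  refine ⟨fun b s t _ _ _ => ?_, fun b s t _ _ _ hbst => ?_⟩
  · rw [hxy]
    exact sq_two_mul_div_le _ _
  · rw [hxy]
    exact sq_two_mul_div_eq_of_eq_zero (by positivity) (by linarith)
end

section
/- Let f : X → ℝ² be an L-bi-Lipschitz map, and let x, y, z, w ∈ X satisfy d(x,y) = d(y,z) = d(z,w) = d(w,x) = π/2 and d(x,z) = d(y,w) = π (four evenly spaced points on an intrinsic circle of circumference 2π). If f is 1-Lipschitz, then min(‖f(x) - f(z)‖, ‖f(y) - f(w)‖) ≤ π/√2; consequently the distortion of f is at least √2. -/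
open Real

theorem norm_sub_sq_add_norm_sub_sq_le {E : Type*} [NormedAddCommGroup E]
    [InnerProductSpace ℝ E] (a b c d : E) :
    ‖a - c‖ ^ 2 + ‖b - d‖ ^ 2 ≤
      ‖a - b‖ ^ 2 + ‖b - c‖ ^ 2 + ‖c - d‖ ^ 2 + ‖d - a‖ ^ 2 := by
  have euler : ‖a - b‖ ^ 2 + ‖b - c‖ ^ 2 + ‖c - d‖ ^ 2 + ‖d - a‖ ^ 2 =
      ‖a - c‖ ^ 2 + ‖b - d‖ ^ 2 + ‖a - b + c - d‖ ^ 2 := by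
    simp only [← real_inner_self_eq_norm_sq, inner_sub_left, inner_sub_right,
      inner_add_left, inner_add_right]
    rw [real_inner_comm b a, real_inner_comm c a, real_inner_comm c b,
      real_inner_comm d a, real_inner_comm d b, real_inner_comm d c]
    ring
  rw [euler]
  exact le_add_of_nonneg_right (sq_nonneg _)

theorem LipschitzWith.norm_sub_sq_add_norm_sub_sq_le {X E : Type*} [PseudoMetricSpace X]
    [NormedAddCommGroup E] [InnerProductSpace ℝ E] {f : X → E} (hf : LipschitzWith 1 f)
    (x y z w : X) :
    ‖f x - f z‖ ^ 2 + ‖f y - f w‖ ^ 2 ≤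
      dist x y ^ 2 + dist y z ^ 2 + dist z w ^ 2 + dist w x ^ 2 := by
  have side (a b : X) : ‖f a - f b‖ ≤ dist a b := by
    simpa [dist_eq_norm] using hf.dist_le_mul a b
  calc _ ≤ ‖f x - f y‖ ^ 2 + ‖f y - f z‖ ^ 2 + ‖f z - f w‖ ^ 2 + ‖f w - f x‖ ^ 2 :=
        _root_.norm_sub_sq_add_norm_sub_sq_le _ _ _ _
    _ ≤ _ := by gcongr <;> exact side _ _

theorem sqrt_two_mul_min_le_of_sq_add_sq_le {a b c : ℝ} (ha : 0 ≤ a) (hb : 0 ≤ b)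
    (hc : 0 ≤ c) (h : a ^ 2 + b ^ 2 ≤ c ^ 2) : √2 * min a b ≤ c := by
  have hm : 0 ≤ min a b := le_min ha hb
  have hsq : 2 * min a b ^ 2 ≤ a ^ 2 + b ^ 2 := by
    have := min_le_left a b
    have := min_le_right a b
    nlinarith
  refine (pow_le_pow_iff_left₀ (by positivity) hc two_ne_zero).mp ?_
  rw [mul_pow, sq_sqrt zero_le_two]
  exact hsq.trans h

theorem stmt_17_general {X : Type*} [MetricSpace X]
    (f : X → EuclideanSpace ℝ (Fin 2))
    (hf : LipschitzWith 1 f) (x y z w : X)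
    (hxy : dist x y = Real.pi / 2) (hyz : dist y z = Real.pi / 2)
    (hzw : dist z w = Real.pi / 2) (hwx : dist w x = Real.pi / 2)
    (hxz : dist x z = Real.pi) (hyw : dist y w = Real.pi) :
    min ‖f x - f z‖ ‖f y - f w‖ ≤ Real.pi / Real.sqrt 2 ∧
    (Real.sqrt 2 * ‖f x - f z‖ ≤ dist x z ∨
      Real.sqrt 2 * ‖f y - f w‖ ≤ dist y w) := by
  have hdiag : ‖f x - f z‖ ^ 2 + ‖f y - f w‖ ^ 2 ≤ π ^ 2 := by
    have := hf.norm_sub_sq_add_norm_sub_sq_le x y z w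
    rw [hxy, hyz, hzw, hwx] at this
    exact this.trans_eq (by ring)
  have hmin := sqrt_two_mul_min_le_of_sq_add_sq_le (norm_nonneg _) (norm_nonneg _) pi_pos.le hdiag
  constructor
  · rw [le_div_iff₀ (by positivity), mul_comm]
    exact hmin
  · rw [hxz, hyw, ← min_le_iff, ← mul_min_of_nonneg _ _ (sqrt_nonneg 2)]
    exact hmin

theorem stmt_17 {X : Type*} [MetricSpace X] (L : NNReal)
    (f : X → EuclideanSpace ℝ (Fin 2)) (hbi : AntilipschitzWith L f)
    (hf : LipschitzWith 1 f) (x y z w : X)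
    (hxy : dist x y = Real.pi / 2) (hyz : dist y z = Real.pi / 2)
    (hzw : dist z w = Real.pi / 2) (hwx : dist w x = Real.pi / 2)
    (hxz : dist x z = Real.pi) (hyw : dist y w = Real.pi) :
    min ‖f x - f z‖ ‖f y - f w‖ ≤ Real.pi / Real.sqrt 2 ∧
    (Real.sqrt 2 * ‖f x - f z‖ ≤ dist x z ∨
      Real.sqrt 2 * ‖f y - f w‖ ≤ dist y w) :=
  stmt_17_general f hf x y z w hxy hyz hzw hwx hxz hyw
end
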